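/- Let D be a T×T diagonal matrix with D_{ii} = max_{j,j'} |E_{ij} - E_{ij'}| for E ∈ ℝ^{T×T}, and suppose γ > 0 satisfies √(Σ_i max_{j,j'}|E_{ij}-E_{ij'}|) ≤ γ √(max_{j,j'} Σ_i |E_{ij}-E_{ij'}|). Then ‖D1‖₁ · ‖D1‖_∞ ≤ 8γ² ‖E‖₁², where ‖E‖₁ = max_j Σ_i |E_{ij}|. -/
import Mathlib


/-- Let `D` be diagonal with `D_{ii} = max_{j,j'} |E_{ij} - E_{ij'}|`
and suppose `γ > 0` satisfies
`√(Σ_i max_{j,j'}|E_{ij}-E_{ij'}|) ≤ γ √(max_{j,j'} Σ_i |E_{ij}-E_{ij'}|)`.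
Then `‖D1‖₁ · ‖D1‖_∞ ≤ 8γ² ‖E‖₁²` where `‖E‖₁` is the max abs column sum. -/
theorem statement13 (T : ℕ) [NeZero T]
    (E : Matrix (Fin T) (Fin T) ℝ) (γ : ℝ) (hγ : 0 < γ)
    (D : Fin T → ℝ)
    (hD : ∀ i, D i = Finset.univ.sup' Finset.univ_nonempty
      (fun j => Finset.univ.sup' Finset.univ_nonempty (fun j' => |E i j - E i j'|)))
    (hgam : Real.sqrt (∑ i, D i)
      ≤ γ * Real.sqrt (Finset.univ.sup' Finset.univ_nonempty
          (fun j => Finset.univ.sup' Finset.univ_nonempty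
            (fun j' => ∑ i, |E i j - E i j'|)))) :
    (∑ i, |D i|) * (Finset.univ.sup' Finset.univ_nonempty (fun i => |D i|))
      ≤ 8 * γ ^ 2 * (Finset.univ.sup' Finset.univ_nonempty (fun j => ∑ i, |E i j|)) ^ 2 := by
  obtain ⟨j₀⟩ : Nonempty (Fin T) := ⟨⟨0, Nat.pos_of_ne_zero (NeZero.ne T)⟩⟩
  set N := Finset.univ.sup' Finset.univ_nonempty (fun j => ∑ i, |E i j|) with hN
  have hNcol : ∀ j, ∑ i, |E i j| ≤ N := fun j => Finset.le_sup' (fun j => ∑ i, |E i j|) (Finset.mem_univ j)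
  have hN0 : 0 ≤ N :=
    le_trans (Finset.sum_nonneg fun i _ => abs_nonneg _) (hNcol j₀)
  have hDnn : ∀ i, 0 ≤ D i := by
    intro i
    rw [hD i]
    calc (0:ℝ) ≤ |E i j₀ - E i j₀| := abs_nonneg _
    _ ≤ Finset.univ.sup' Finset.univ_nonempty (fun j' => |E i j₀ - E i j'|) :=
        Finset.le_sup' (fun j' => |E i j₀ - E i j'|) (Finset.mem_univ j₀)
    _ ≤ _ := Finset.le_sup' (fun j => Finset.univ.sup' Finset.univ_nonempty
        (fun j' => |E i j - E i j'|)) (Finset.mem_univ j₀)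
  have hEentry : ∀ i j, |E i j| ≤ N := fun i j =>
    le_trans (Finset.single_le_sum (fun i' _ => abs_nonneg (E i' j)) (Finset.mem_univ i))
      (hNcol j)
  have hDle : ∀ i, D i ≤ 2 * N := by
    intro i
    rw [hD i]
    apply Finset.sup'_le
    intro j _
    apply Finset.sup'_le
    intro j' _
    calc |E i j - E i j'| ≤ |E i j| + |E i j'| := abs_sub _ _
    _ ≤ N + N := add_le_add (hEentry i j) (hEentry i j')
    _ = 2 * N := by ring
  -- bound on M
  have hM : Finset.univ.sup' Finset.univ_nonempty
      (fun j => Finset.univ.sup' Finset.univ_nonempty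
        (fun j' => ∑ i, |E i j - E i j'|)) ≤ 2 * N := by
    apply Finset.sup'_le
    intro j _
    apply Finset.sup'_le
    intro j' _
    calc ∑ i, |E i j - E i j'| ≤ ∑ i, (|E i j| + |E i j'|) :=
        Finset.sum_le_sum fun i _ => abs_sub _ _
    _ = (∑ i, |E i j|) + ∑ i, |E i j'| := Finset.sum_add_distrib
    _ ≤ N + N := add_le_add (hNcol j) (hNcol j')
    _ = 2 * N := by ring
  have hsumD0 : 0 ≤ ∑ i, D i := Finset.sum_nonneg fun i _ => hDnn i
  have hM0 : 0 ≤ Finset.univ.sup' Finset.univ_nonempty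
      (fun j => Finset.univ.sup' Finset.univ_nonempty
        (fun j' => ∑ i, |E i j - E i j'|)) := by
    calc (0:ℝ) ≤ ∑ i, |E i j₀ - E i j₀| := Finset.sum_nonneg fun i _ => abs_nonneg _
    _ ≤ Finset.univ.sup' Finset.univ_nonempty (fun j' => ∑ i, |E i j₀ - E i j'|) :=
        Finset.le_sup' (fun j' => ∑ i, |E i j₀ - E i j'|) (Finset.mem_univ j₀)
    _ ≤ _ := Finset.le_sup' (fun j => Finset.univ.sup' Finset.univ_nonempty
        (fun j' => ∑ i, |E i j - E i j'|)) (Finset.mem_univ j₀)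
  have hsumD : ∑ i, D i ≤ 2 * γ ^ 2 * N := by
    have h2 := Real.sqrt_le_sqrt (le_trans hM (le_refl (2 * N)))
    have hsq : ∑ i, D i ≤ γ ^ 2 * Finset.univ.sup' Finset.univ_nonempty
        (fun j => Finset.univ.sup' Finset.univ_nonempty
          (fun j' => ∑ i, |E i j - E i j'|)) := by
      have := mul_self_le_mul_self (Real.sqrt_nonneg _) hgam
      rw [Real.mul_self_sqrt hsumD0] at this
      calc ∑ i, D i ≤ (γ * Real.sqrt _) * (γ * Real.sqrt _) := this
      _ = γ ^ 2 * (Real.sqrt _ * Real.sqrt _) := by ring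
      _ = γ ^ 2 * _ := by rw [Real.mul_self_sqrt hM0]
    calc ∑ i, D i ≤ γ ^ 2 * _ := hsq
    _ ≤ γ ^ 2 * (2 * N) := by
        apply mul_le_mul_of_nonneg_left hM (sq_nonneg γ)
    _ = 2 * γ ^ 2 * N := by ring
  have habs : (∑ i, |D i|) = ∑ i, D i :=
    Finset.sum_congr rfl fun i _ => abs_of_nonneg (hDnn i)
  have hsup : Finset.univ.sup' Finset.univ_nonempty (fun i => |D i|) ≤ 2 * N := by
    apply Finset.sup'_le
    intro i _
    rw [abs_of_nonneg (hDnn i)]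
    exact hDle i
  have hsup0 : 0 ≤ Finset.univ.sup' Finset.univ_nonempty (fun i => |D i|) :=
    le_trans (abs_nonneg (D j₀)) (Finset.le_sup' (fun i => |D i|) (Finset.mem_univ j₀))
  calc (∑ i, |D i|) * Finset.univ.sup' Finset.univ_nonempty (fun i => |D i|)
      ≤ (2 * γ ^ 2 * N) * (2 * N) := by
        apply mul_le_mul (habs ▸ hsumD) hsup hsup0
        positivity
  _ = 4 * γ ^ 2 * N ^ 2 := by ring
  _ ≤ 8 * γ ^ 2 * N ^ 2 := by nlinarith [sq_nonneg N, sq_nonneg γ]
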